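/- Let H_j be a d×d symmetric positive definite matrix, c_j, ŵ ∈ R^d, and α̂_1,…,α̂_n ∈ R^d with ∑_i α̂_i = 0. The problem of minimizing (1/2)∑_i ‖α_i − α̂_i‖² + (1/2)‖w − ŵ‖²_{H_j} subject to H_j(w − ŵ) − α_j = c_j and ∑_i α_i = 0 has unique solution: w = ŵ + d, α_j = α̂_j − ((n−1)/n)d, α_i = α̂_i + (1/n)d for i ≠ j, where d = (((n−1)/n)I + H_j)⁻¹(c_j + α̂_j). -/

import Mathlib

/-! The objective is a strictly convex quadratic and the constraints are linear, so a feasible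
point at which the Lagrangian is stationary is the unique minimizer: along a feasible perturbation
`(δw, δ)` we have `H δw = δⱼ` and `∑ δᵢ = 0`, which kills the first-order term of the objective and
leaves the positive definite form `½ ∑ ‖δᵢ‖² + ½ ‖δw‖²_H`. The closed form is such a point, with
multipliers `d / n` for `∑ αᵢ = 0` and `d` for the coupling constraint, and the equation
`((n - 1) / n • I + H) d = c + α̂ⱼ` defining `d` is exactly the coupling constraint. -/

open Matrix

namespace Matrix

variable {m : Type*} [Fintype m]

theorem IsSymm.mulVec_dotProduct {R : Type*} [CommSemiring R] {H : Matrix m m R} (hH : H.IsSymm)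
    (u v : m → R) : H *ᵥ u ⬝ᵥ v = u ⬝ᵥ H *ᵥ v := by
  rw [dotProduct_mulVec, ← mulVec_transpose, hH.eq]

theorem IsSymm.mulVec_add_dotProduct_add {R : Type*} [CommRing R] {H : Matrix m m R}
    (hH : H.IsSymm) (u v : m → R) :
    H *ᵥ (u + v) ⬝ᵥ (u + v) = H *ᵥ u ⬝ᵥ u + 2 * (H *ᵥ u ⬝ᵥ v) + H *ᵥ v ⬝ᵥ v := by
  rw [mulVec_add, add_dotProduct, dotProduct_add, dotProduct_add, hH.mulVec_dotProduct v u,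
    dotProduct_comm v (H *ᵥ u)]
  ring

theorem PosDef.mulVec_inv_mulVec {K : Type*} [Field K] [PartialOrder K] [StarRing K]
    [DecidableEq m] {M : Matrix m m K} (hM : M.PosDef) (v : m → K) : M *ᵥ (M⁻¹ *ᵥ v) = v := by
  rw [mulVec_mulVec, mul_nonsing_inv _ ((isUnit_iff_isUnit_det _).mp hM.isUnit), one_mulVec]

theorem add_dotProduct_add_self {R : Type*} [CommRing R] (u v : m → R) :
    (u + v) ⬝ᵥ (u + v) = u ⬝ᵥ u + 2 * (u ⬝ᵥ v) + v ⬝ᵥ v := by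
  rw [add_dotProduct, dotProduct_add, dotProduct_add, dotProduct_comm v u]
  ring

end Matrix

theorem Finset.sum_one_div_card_smul_sub_ite {ι E : Type*} [Fintype ι] [DecidableEq ι]
    [AddCommGroup E] [Module ℝ E] (j : ι) (v : E) :
    ∑ i, ((1 / (Fintype.card ι : ℝ)) • v - if i = j then v else 0) = 0 := by
  have hcard : (Fintype.card ι : ℝ) ≠ 0 := Nat.cast_ne_zero.mpr (Fintype.card_pos_iff.mpr ⟨j⟩).ne'
  rw [Finset.sum_sub_distrib, Finset.sum_const, Finset.card_univ, Finset.sum_ite_eq',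
    if_pos (Finset.mem_univ j), ← Nat.cast_smul_eq_nsmul ℝ, smul_smul, mul_one_div_cancel hcard,
    one_smul, sub_self]

section ProjectionObjective

variable {m ι : Type*} [Fintype m] [Fintype ι]

noncomputable def projectionObjective (H : Matrix m m ℝ) (what : m → ℝ) (alphahat : ι → m → ℝ)
    (w : m → ℝ) (alpha : ι → m → ℝ) : ℝ :=
  (1 / 2) * (∑ i, (alpha i - alphahat i) ⬝ᵥ (alpha i - alphahat i)) +
    (1 / 2) * (H *ᵥ (w - what) ⬝ᵥ (w - what))

theorem projectionObjective_add {H : Matrix m m ℝ} (hH : H.IsSymm) (what : m → ℝ)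
    (alphahat : ι → m → ℝ) (w δw : m → ℝ) (alpha δ : ι → m → ℝ) :
    projectionObjective H what alphahat (w + δw) (alpha + δ) =
      projectionObjective H what alphahat w alpha +
        (∑ i, (alpha i - alphahat i) ⬝ᵥ δ i + H *ᵥ (w - what) ⬝ᵥ δw) +
        projectionObjective H 0 0 δw δ := by
  have hα : ∀ i, (alpha + δ) i - alphahat i = (alpha i - alphahat i) + δ i := fun i => by
    rw [Pi.add_apply]; abel
  have hw : w + δw - what = (w - what) + δw := by abel
  simp only [projectionObjective, hα, hw, add_dotProduct_add_self, hH.mulVec_add_dotProduct_add,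
    Finset.sum_add_distrib, ← Finset.mul_sum, Pi.zero_apply, sub_zero]
  ring

theorem projectionObjective_zero_zero_pos {H : Matrix m m ℝ} (hH : H.PosDef) {δw : m → ℝ}
    {δ : ι → m → ℝ} (h : (δw, δ) ≠ 0) : 0 < projectionObjective H 0 0 δw δ := by
  have hself : ∀ v : m → ℝ, 0 ≤ v ⬝ᵥ v := fun v => by simpa using dotProduct_star_self_nonneg v
  have hα : 0 ≤ ∑ i, δ i ⬝ᵥ δ i := Finset.sum_nonneg fun i _ => hself (δ i)
  have hw : 0 ≤ H *ᵥ δw ⬝ᵥ δw := by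
    simpa [dotProduct_comm] using hH.posSemidef.dotProduct_mulVec_nonneg δw
  simp only [projectionObjective, Pi.zero_apply, sub_zero]
  rw [Ne, Prod.mk_eq_zero, not_and_or] at h
  rcases h with hδw | hδ
  · have hw_pos := hH.dotProduct_mulVec_pos hδw
    rw [star_trivial, dotProduct_comm] at hw_pos
    linarith
  · obtain ⟨i, hi⟩ := Function.ne_iff.mp hδ
    have hα_pos : 0 < ∑ i, δ i ⬝ᵥ δ i := Finset.sum_pos' (fun i _ => hself (δ i))
      ⟨i, Finset.mem_univ i, by simpa using dotProduct_star_self_pos_iff.mpr hi⟩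
    linarith

/-- `lam` and `mu` are Lagrange multipliers of `∑ αᵢ = 0` and `H (w - ŵ) - αⱼ = c`; `hw` and `ha`
say that `(wstar, alphastar)` is a stationary point of the Lagrangian. -/
theorem projectionObjective_lt_of_stationary [DecidableEq ι] {H : Matrix m m ℝ} (hH : H.PosDef)
    {what c : m → ℝ} {alphahat : ι → m → ℝ} {j : ι} {wstar : m → ℝ} {alphastar : ι → m → ℝ}
    (lam mu : m → ℝ) (hw : wstar - what = mu)
    (ha : ∀ i, alphastar i - alphahat i = lam - if i = j then mu else 0)
    (hfeas : H *ᵥ (wstar - what) - alphastar j = c) (hsum : ∑ i, alphastar i = 0)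
    {w : m → ℝ} {alpha : ι → m → ℝ} (hfeas' : H *ᵥ (w - what) - alpha j = c)
    (hsum' : ∑ i, alpha i = 0) (hne : (w, alpha) ≠ (wstar, alphastar)) :
    projectionObjective H what alphahat wstar alphastar <
      projectionObjective H what alphahat w alpha := by
  have hH_symm : H.IsSymm := isHermitian_iff_isSymm.mp hH.isHermitian
  obtain ⟨δw, rfl⟩ : ∃ δw, w = wstar + δw := ⟨w - wstar, by abel⟩
  obtain ⟨δ, rfl⟩ : ∃ δ, alpha = alphastar + δ := ⟨alpha - alphastar, by abel⟩
  have hHδw : H *ᵥ δw = δ j := by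
    rw [add_sub_right_comm, mulVec_add, Pi.add_apply] at hfeas'
    linear_combination hfeas' - hfeas
  have hδsum : ∑ i, δ i = 0 := by
    simpa only [Pi.add_apply, Finset.sum_add_distrib, hsum, zero_add] using hsum'
  have hδj : ∑ i, (if i = j then mu else 0) ⬝ᵥ δ i = mu ⬝ᵥ δ j := by
    rw [Finset.sum_eq_single_of_mem j (Finset.mem_univ j) fun i _ hi => by
      rw [if_neg hi, zero_dotProduct], if_pos rfl]
  have hlin : ∑ i, (alphastar i - alphahat i) ⬝ᵥ δ i + H *ᵥ (wstar - what) ⬝ᵥ δw = 0 :=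
    calc _ = lam ⬝ᵥ ∑ i, δ i - mu ⬝ᵥ δ j + mu ⬝ᵥ H *ᵥ δw := by
          simp only [ha, hw, sub_dotProduct, Finset.sum_sub_distrib, ← dotProduct_sum, hδj,
            hH_symm.mulVec_dotProduct]
      _ = 0 := by rw [hδsum, hHδw, dotProduct_zero]; ring
  have hpos : 0 < projectionObjective H 0 0 δw δ :=
    projectionObjective_zero_zero_pos hH fun h => hne <| by
      rw [Prod.mk_eq_zero] at h
      rw [h.1, h.2, add_zero, add_zero]
  have := projectionObjective_add hH_symm what alphahat wstar δw alphastar δ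
  rw [hlin] at this
  linarith

end ProjectionObjective

theorem SANA_projection_closed_form_general {d n : ℕ} (j : Fin n)
    (Hj : Matrix (Fin d) (Fin d) ℝ) (hHj : Hj.PosDef)
    (cj what : Fin d → ℝ) (alphahat : Fin n → Fin d → ℝ)
    (hsum : ∑ i, alphahat i = 0)
    (dvec : Fin d → ℝ)
    (hdvec : dvec = ((((n : ℝ) - 1) / n) • (1 : Matrix (Fin d) (Fin d) ℝ) + Hj)⁻¹.mulVec
      (cj + alphahat j))
    (wstar : Fin d → ℝ) (alphastar : Fin n → Fin d → ℝ)
    (hw : wstar = what + dvec)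
    (haj : alphastar j = alphahat j - (((n : ℝ) - 1) / n) • dvec)
    (hai : ∀ i : Fin n, i ≠ j → alphastar i = alphahat i + (1 / (n : ℝ)) • dvec) :
    (Hj.mulVec (wstar - what) - alphastar j = cj) ∧ (∑ i, alphastar i = 0) ∧
      ∀ (w : Fin d → ℝ) (alpha : Fin n → Fin d → ℝ),
        Hj.mulVec (w - what) - alpha j = cj → (∑ i, alpha i = 0) →
          (w, alpha) ≠ (wstar, alphastar) →
          (1 / 2) * (∑ i, (alphastar i - alphahat i) ⬝ᵥ (alphastar i - alphahat i)) +
            (1 / 2) * (Hj.mulVec (wstar - what) ⬝ᵥ (wstar - what)) <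
          (1 / 2) * (∑ i, (alpha i - alphahat i) ⬝ᵥ (alpha i - alphahat i)) +
            (1 / 2) * (Hj.mulVec (w - what) ⬝ᵥ (w - what)) := by
  have hn : (0 : ℝ) < n := Nat.cast_pos.mpr j.pos
  have hc : ((n : ℝ) - 1) / n = 1 - 1 / n := by field_simp
  rw [hc] at hdvec haj
  have hM : ((1 - 1 / (n : ℝ)) • (1 : Matrix (Fin d) (Fin d) ℝ) + Hj).PosDef :=
    PosDef.posSemidef_add (PosSemidef.one.smul (sub_nonneg.mpr ((div_le_one hn).mpr
      (Nat.one_le_cast.mpr j.pos)))) hHj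
  have hMd := hdvec ▸ hM.mulVec_inv_mulVec (cj + alphahat j)
  rw [add_mulVec, smul_mulVec, one_mulVec] at hMd
  have hws : wstar - what = dvec := by rw [hw, add_sub_cancel_left]
  have hstar : ∀ i,
      alphastar i - alphahat i = (1 / (n : ℝ)) • dvec - if i = j then dvec else 0 := by
    intro i
    rcases eq_or_ne i j with rfl | hij
    · rw [haj, if_pos rfl, sub_smul, one_smul]; abel
    · rw [hai i hij, if_neg hij]; abel
  have feas1 : Hj *ᵥ (wstar - what) - alphastar j = cj := by
    rw [hws, haj]
    linear_combination (norm := module) hMd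
  have feas2 : ∑ i, alphastar i = 0 := by
    have h := Finset.sum_one_div_card_smul_sub_ite j dvec
    rw [Fintype.card_fin, ← Finset.sum_congr rfl fun i _ => hstar i, Finset.sum_sub_distrib, hsum,
      sub_zero] at h
    exact h
  exact ⟨feas1, feas2, fun w alpha hfeas hsum' hne =>
    projectionObjective_lt_of_stationary hHj _ _ hws hstar feas1 feas2 hfeas hsum' hne⟩

/-- The SANA projection subproblem: minimizing
`(1/2)∑ᵢ ‖αᵢ − α̂ᵢ‖² + (1/2)‖w − ŵ‖²_{H_j}` subject to `H_j(w − ŵ) − α_j = c_j` and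
`∑ᵢ αᵢ = 0` (with `∑ᵢ α̂ᵢ = 0`) has the unique solution `w = ŵ + d`,
`α_j = α̂_j − ((n−1)/n)d`, `α_i = α̂_i + (1/n)d` for `i ≠ j`, where
`d = (((n−1)/n)I + H_j)⁻¹(c_j + α̂_j)`. -/
theorem SANA_projection_closed_form {d n : ℕ} (hn : 1 ≤ n) (j : Fin n)
    (Hj : Matrix (Fin d) (Fin d) ℝ) (hHj : Hj.PosDef)
    (cj what : Fin d → ℝ) (alphahat : Fin n → Fin d → ℝ)
    (hsum : ∑ i, alphahat i = 0)
    (dvec : Fin d → ℝ)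
    (hdvec : dvec = ((((n : ℝ) - 1) / n) • (1 : Matrix (Fin d) (Fin d) ℝ) + Hj)⁻¹.mulVec
      (cj + alphahat j))
    (wstar : Fin d → ℝ) (alphastar : Fin n → Fin d → ℝ)
    (hw : wstar = what + dvec)
    (haj : alphastar j = alphahat j - (((n : ℝ) - 1) / n) • dvec)
    (hai : ∀ i : Fin n, i ≠ j → alphastar i = alphahat i + (1 / (n : ℝ)) • dvec) :
    (Hj.mulVec (wstar - what) - alphastar j = cj) ∧ (∑ i, alphastar i = 0) ∧
      ∀ (w : Fin d → ℝ) (alpha : Fin n → Fin d → ℝ),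
        Hj.mulVec (w - what) - alpha j = cj → (∑ i, alpha i = 0) →
          (w, alpha) ≠ (wstar, alphastar) →
          (1 / 2) * (∑ i, (alphastar i - alphahat i) ⬝ᵥ (alphastar i - alphahat i)) +
            (1 / 2) * (Hj.mulVec (wstar - what) ⬝ᵥ (wstar - what)) <
          (1 / 2) * (∑ i, (alpha i - alphahat i) ⬝ᵥ (alpha i - alphahat i)) +
            (1 / 2) * (Hj.mulVec (w - what) ⬝ᵥ (w - what)) :=
  SANA_projection_closed_form_general j Hj hHj cj what alphahat hsum dvec hdvec wstar alphastar hw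
    haj hai
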